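/- arXiv:1710.07699 — 5 statements merged into one kernel-verified Lean document; each statement's English description precedes it below -/
import Mathlib

section
/- In a finite graph with |V| vertices and |V| edges, if the determinant of the unoriented incidence matrix is nonzero, then the graph is an odd saturated forest, i.e., every connected component contains exactly one cycle and all cycles are odd. -/
/-- A finite multigraph: loops and multiple edges are allowed.  Each edge `e`
has two (possibly equal) endpoints `fst e` and `snd e`. -/
structure Multigraph where
  V : Type
  E : Type
  [fintV : Fintype V]
  [fintE : Fintype E]
  [decV : DecidableEq V]
  fst : E → V
  snd : E → V

attribute [instance] Multigraph.fintV Multigraph.fintE Multigraph.decV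

namespace Multigraph

/-- The unoriented incidence matrix: entry `1` for an incidence of a non-loop
edge, `2` for a loop at the vertex, `0` otherwise. -/
def inc (G : Multigraph) : Matrix G.V G.E ℚ := fun v e =>
  (if G.fst e = v then 1 else 0) + (if G.snd e = v then 1 else 0)

/-- A cycle of length `l ≥ 1` in a multigraph: distinct vertices `c 0, …, c (l-1)`
and distinct edges `f 0, …, f (l-1)`, edge `f i` joining `c i` and `c (i+1)`.
A loop is a cycle of length `1`, two parallel edges form a cycle of length `2`. -/
def IsCycle (G : Multigraph) (l : ℕ) (c : ZMod l → G.V) (f : ZMod l → G.E) : Prop :=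
  0 < l ∧ Function.Injective c ∧ Function.Injective f ∧
    ∀ i, (G.fst (f i) = c i ∧ G.snd (f i) = c (i + 1)) ∨
      (G.fst (f i) = c (i + 1) ∧ G.snd (f i) = c i)

/-- Adjacency via some edge. -/
def Adj (G : Multigraph) (u v : G.V) : Prop :=
  ∃ e, (G.fst e = u ∧ G.snd e = v) ∨ (G.fst e = v ∧ G.snd e = u)

/-- The setoid of connected components. -/
def compSetoid (G : Multigraph) : Setoid G.V :=
  ⟨Relation.EqvGen G.Adj, Relation.EqvGen.is_equivalence _⟩

/-- The connected components of `G`. -/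
def Comp (G : Multigraph) : Type := Quotient G.compSetoid

/-- Number of connected components. -/
noncomputable def numComp (G : Multigraph) : ℕ := Nat.card G.Comp

/-- `G` is a saturated forest iff every connected component has equally many
vertices and edges (equivalently: every component contains exactly one cycle). -/
def IsSaturatedForest (G : Multigraph) : Prop :=
  ∀ K : G.Comp,
    Nat.card {v : G.V // Quotient.mk G.compSetoid v = K} =
      Nat.card {e : G.E // Quotient.mk G.compSetoid (G.fst e) = K}

/-- `G` contains no even cycle. -/
def NoEvenCycle (G : Multigraph) : Prop :=
  ∀ l c f, G.IsCycle l c f → Odd l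

/-- An odd saturated forest: every component contains exactly one cycle and all
cycles are odd. -/
def IsOddSaturatedForest (G : Multigraph) : Prop :=
  G.IsSaturatedForest ∧ G.NoEvenCycle

end Multigraph

open Matrix Multigraph

lemma comp_fst_eq_comp_snd (G : Multigraph) (e : G.E) :
    Quotient.mk G.compSetoid (G.fst e) = Quotient.mk G.compSetoid (G.snd e) :=
  Quotient.sound (Relation.EqvGen.rel _ _ ⟨e, Or.inl ⟨rfl, rfl⟩⟩)

lemma even_cycle_det_zero (G : Multigraph) (σ : G.V ≃ G.E) {l : ℕ} {c : ZMod l → G.V}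
    {f : ZMod l → G.E} (hcyc : G.IsCycle l c f) (hl : Even l) :
    (Matrix.of fun u v : G.V => G.inc u (σ v)).det = 0 := by
  classical
  obtain ⟨hl0, hc, hf, hcf⟩ := hcyc
  haveI : NeZero l := ⟨hl0.ne'⟩
  have h1l : 1 < l := by
    obtain ⟨k, hk⟩ := hl; omega
  haveI : Fact (1 < l) := ⟨h1l⟩
  set sgn : ZMod l → ℚ := fun i => if Even i.val then 1 else -1 with hsgn
  have hstep : ∀ i : ZMod l, sgn (i + 1) = - sgn i := by
    intro i
    have hval : (i + 1).val % 2 = (i.val + 1) % 2 := by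
      rw [ZMod.val_add, ZMod.val_one, Nat.mod_mod_of_dvd _ hl.two_dvd]
    have h2 : Even (i + 1).val ↔ ¬ Even i.val := by
      rw [Nat.even_iff, Nat.even_iff, hval]; omega
    by_cases h : Even i.val <;> simp [hsgn, h, h2]
  set y : G.V → ℚ := fun u => ∑ i : ZMod l, if f i = σ u then sgn i else 0 with hy
  have hy0 : y ≠ 0 := by
    intro h
    have h0 : y (σ.symm (f 0)) = 1 := by
      rw [hy]
      simp only [Equiv.apply_symm_apply]
      rw [Finset.sum_eq_single 0]
      · simp [hsgn]
      · intro i _ hi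
        rw [if_neg (fun he => hi (hf he))]
      · simp
    rw [h] at h0
    simp at h0
  have hker : (Matrix.of fun u v : G.V => G.inc u (σ v)).mulVec y = 0 := by
    funext v
    have step1 : (Matrix.of fun u v : G.V => G.inc u (σ v)).mulVec y v
        = ∑ i : ZMod l, G.inc v (f i) * sgn i := by
      simp only [Matrix.mulVec, dotProduct, Matrix.of_apply, hy]
      rw [Finset.sum_congr rfl (fun u _ => Finset.mul_sum _ _ _)]
      rw [Finset.sum_comm]
      refine Finset.sum_congr rfl (fun i _ => ?_)
      rw [Finset.sum_eq_single (σ.symm (f i))]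
      · simp
      · intro u _ hu
        rw [if_neg (fun he => hu (by rw [he, Equiv.symm_apply_apply])), mul_zero]
      · simp
    rw [step1]
    set g : ZMod l → ℚ := fun i => (if c i = v then (1:ℚ) else 0) * sgn i with hg
    have key : ∀ i : ZMod l, G.inc v (f i) * sgn i = g i - g (i + 1) := by
      intro i
      rcases hcf i with ⟨h1, h2⟩ | ⟨h1, h2⟩ <;>
        · simp only [Multigraph.inc, h1, h2, hg]
          rw [hstep i]; ring
    rw [Finset.sum_congr rfl (fun i _ => key i), Finset.sum_sub_distrib]
    have hre : ∑ i : ZMod l, g (i + 1) = ∑ i : ZMod l, g i :=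
      Fintype.sum_equiv (Equiv.addRight (1 : ZMod l)) _ _ (fun _ => rfl)
    simp [hre]
  exact Matrix.exists_mulVec_eq_zero_iff.mp ⟨y, hy0, hker⟩

lemma card_edge_le_card_vertex (G : Multigraph) (σ : G.V ≃ G.E)
    (hdet : (Matrix.of fun u v : G.V => G.inc u (σ v)).det ≠ 0) (K : G.Comp) :
    Nat.card {e : G.E // Quotient.mk G.compSetoid (G.fst e) = K} ≤
      Nat.card {v : G.V // Quotient.mk G.compSetoid v = K} := by
  classical
  have hind : LinearIndependent ℚ (fun (e : {e : G.E // Quotient.mk G.compSetoid (G.fst e) = K}) =>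
      (fun v : {v : G.V // Quotient.mk G.compSetoid v = K} => G.inc v.1 e.1)) := by
    rw [Fintype.linearIndependent_iff]
    intro a ha
    set x : G.V → ℚ := fun u =>
      if h : Quotient.mk G.compSetoid (G.fst (σ u)) = K then a ⟨σ u, h⟩ else 0 with hx
    have hsum : ∀ v : G.V, (Matrix.of fun u v : G.V => G.inc u (σ v)).mulVec x v
        = ∑ e : {e : G.E // Quotient.mk G.compSetoid (G.fst e) = K}, a e * G.inc v e.1 := by
      intro v
      simp only [Matrix.mulVec, dotProduct, Matrix.of_apply, hx]
      rw [← Equiv.sum_comp σ.symm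
        (fun u => G.inc v (σ u) * if h : Quotient.mk G.compSetoid (G.fst (σ u)) = K
          then a ⟨σ u, h⟩ else 0)]
      simp only [Equiv.apply_symm_apply]
      rw [← Finset.sum_filter_of_ne
        (p := fun e => Quotient.mk G.compSetoid (G.fst e) = K) (s := Finset.univ)
        (by intro e _ hne
            by_contra h
            exact hne (by rw [dif_neg h, mul_zero]))]
      rw [Finset.sum_subtype (p := fun e => Quotient.mk G.compSetoid (G.fst e) = K)
        (Finset.filter (fun e => Quotient.mk G.compSetoid (G.fst e) = K) Finset.univ)
        (fun e => by simp) (fun e => G.inc v e *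
        if h : Quotient.mk G.compSetoid (G.fst e) = K then a ⟨e, h⟩ else 0)]
      refine Finset.sum_congr rfl (fun e _ => ?_)
      rw [dif_pos e.2, mul_comm]
    have hker : (Matrix.of fun u v : G.V => G.inc u (σ v)).mulVec x = 0 := by
      funext v
      rw [hsum v]
      by_cases hv : Quotient.mk G.compSetoid v = K
      · have := congrFun ha ⟨v, hv⟩
        simpa using this
      · rw [Pi.zero_apply]
        refine Finset.sum_eq_zero (fun e _ => ?_)
        have h1 : G.fst e.1 ≠ v := fun h => hv (h ▸ e.2)
        have h2 : G.snd e.1 ≠ v := fun h => hv (by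
          rw [← h, ← comp_fst_eq_comp_snd]; exact e.2)
        simp [Multigraph.inc, h1, h2]
    have hx0 : x = 0 := by
      by_contra h
      exact hdet (Matrix.exists_mulVec_eq_zero_iff.mp ⟨x, h, hker⟩)
    intro e
    have h1 : x (σ.symm e.1) = a e := by
      rw [hx]
      simp only [Equiv.apply_symm_apply]
      rw [dif_pos e.2]
    rw [hx0, Pi.zero_apply] at h1
    exact h1.symm
  have := hind.fintype_card_le_finrank
  rw [Module.finrank_fintype_fun_eq_card] at this
  rw [Nat.card_eq_fintype_card, Nat.card_eq_fintype_card]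
  exact this

/-- If a graph with equally many vertices and edges has incidence matrix with
nonzero determinant, then it is an odd saturated forest: every connected
component contains exactly one cycle and all cycles are odd. -/
theorem odd_saturated_forest_of_det_ne_zero (G : Multigraph) (σ : G.V ≃ G.E)
    (hdet : (Matrix.of fun u v : G.V => G.inc u (σ v)).det ≠ 0) :
    G.IsOddSaturatedForest := by
  classical
  constructor
  · intro K
    haveI : Finite G.Comp := Quotient.finite _
    haveI : Fintype G.Comp := Fintype.ofFinite _
    have hle : ∀ K : G.Comp,
        Nat.card {e : G.E // Quotient.mk G.compSetoid (G.fst e) = K} ≤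
          Nat.card {v : G.V // Quotient.mk G.compSetoid v = K} :=
      card_edge_le_card_vertex G σ hdet
    have hV : ∑ K : G.Comp, Nat.card {v : G.V // Quotient.mk G.compSetoid v = K}
        = Fintype.card G.V := by
      simp_rw [Nat.card_eq_fintype_card]
      rw [← Fintype.card_sigma]
      exact Fintype.card_congr (Equiv.sigmaFiberEquiv
        (fun v : G.V => (Quotient.mk G.compSetoid v : G.Comp)))
    have hE : ∑ K : G.Comp, Nat.card {e : G.E // Quotient.mk G.compSetoid (G.fst e) = K}
        = Fintype.card G.V := by
      simp_rw [Nat.card_eq_fintype_card]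
      rw [← Fintype.card_sigma]
      refine Eq.trans (Fintype.card_congr (Equiv.sigmaFiberEquiv
        (fun e : G.E => (Quotient.mk G.compSetoid (G.fst e) : G.Comp)))) ?_
      exact Fintype.card_congr σ.symm
    have := (Finset.sum_eq_sum_iff_of_le (fun K _ => hle K)).mp
      (by rw [hE, hV]) K (Finset.mem_univ K)
    exact this.symm
  · intro l c f hcyc
    rcases Nat.even_or_odd l with he | ho
    · exact absurd (even_cycle_det_zero G σ hcyc he) hdet
    · exact ho
end

section
/- Let n_1, …, n_r be positive reals (r ≥ 2) and Q_1, …, Q_r reals, and set h_j = Q_j / n_j. Suppose for every m ∈ {1,…,r}: (1/n_m)·∏_{j≠m}(h_m − h_j) = (∑_{i=1}^r 1/n_i)·h_m^{r−1}. Then ∑_{j=1}^r Q_j = 0. -/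
/-!
With `c m = n m * ∑ i, 1 / n i > 1`, the hypothesis reads
`∏_{j ≠ m} (h m - h j) = c m * h m ^ (r - 1)`. Indices with `h j = 0` contribute the same factor
`h m` to both sides, so one may pass to the support `T` of `h`, on which `h` is injective because
the right-hand side does not vanish. If `#T ≥ 3`, let `a > c` be the second and third largest
values of `h` on `T`: the product at `a` has exactly one negative factor and the one at `c`
exactly two, so `a ^ (#T - 1) < 0 < c ^ (#T - 1)`; the exponent must then be odd, contradicting
`c < a`. If `T = {m}` the identity says `c m = 1`, and if `T = {a, b}` adding the two identities
gives `(∑ i, 1 / n i) * (Q a + Q b) = 0`.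
-/

open Finset

theorem prod_sub_eq_prod_filter_ne_zero_mul_pow {ι R : Type*} [CommRing R] [DecidableEq R]
    (s : Finset ι) (x : ι → R) (t : R) :
    ∏ j ∈ s, (t - x j) = (∏ j ∈ s.filter (x · ≠ 0), (t - x j)) * t ^ #(s.filter (x · = 0)) := by
  rw [← prod_filter_mul_prod_filter_not s (x · ≠ 0)]
  congr 1
  simp only [not_not]
  exact prod_eq_pow_card fun j hj => by rw [(mem_filter.1 hj).2, sub_zero]

theorem prod_erase_filter_ne_zero_sub_eq {ι R : Type*} [Fintype ι] [DecidableEq ι] [CommRing R]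
    [IsDomain R] [DecidableEq R] (x : ι → R) (c : R) {m : ι} (hm : x m ≠ 0)
    (H : ∏ j ∈ univ.erase m, (x m - x j) = c * x m ^ (Fintype.card ι - 1)) :
    ∏ j ∈ (univ.filter (x · ≠ 0)).erase m, (x m - x j) =
      c * x m ^ (#(univ.filter (x · ≠ 0)) - 1) := by
  have hmT : m ∈ univ.filter (x · ≠ 0) := mem_filter.2 ⟨mem_univ m, hm⟩
  have hcard := card_filter_add_card_filter_not (s := univ) (x · ≠ 0)
  simp only [not_not, card_univ] at hcard
  have hzeros : (univ.erase m).filter (x · = 0) = univ.filter (x · = 0) := by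
    rw [filter_erase, erase_eq_of_notMem (by simp [hm])]
  rw [prod_sub_eq_prod_filter_ne_zero_mul_pow, filter_erase, hzeros,
    show Fintype.card ι - 1 = #(univ.filter (x · = 0)) + (#(univ.filter (x · ≠ 0)) - 1) by
      have := card_pos.2 ⟨m, hmT⟩; omega,
    pow_add, mul_left_comm, mul_comm] at H
  exact mul_left_cancel₀ (pow_ne_zero _ hm) H

section LinearOrderedField

variable {K : Type*} [Field K] [LinearOrder K] [IsStrictOrderedRing K]

theorem card_le_two_of_prod_erase_sub_eq (s : Finset K)
    (hs : ∀ t ∈ s, ∃ c > 0, ∏ u ∈ s.erase t, (t - u) = c * t ^ (#s - 1)) : #s ≤ 2 := by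
  by_contra! h3
  have hs₀ : s.Nonempty := card_pos.1 (by omega)
  set b := s.max' hs₀
  have hb : b ∈ s := max'_mem _ _
  have hs₁ : (s.erase b).Nonempty := card_pos.1 (by rw [card_erase_of_mem hb]; omega)
  set a := (s.erase b).max' hs₁
  have ha₁ : a ∈ s.erase b := max'_mem _ _
  have hs₂ : ((s.erase b).erase a).Nonempty :=
    card_pos.1 (by rw [card_erase_of_mem ha₁, card_erase_of_mem hb]; omega)
  set c := ((s.erase b).erase a).max' hs₂
  have hc₂ : c ∈ (s.erase b).erase a := max'_mem _ _
  have hab : a < b := lt_max'_of_mem_erase_max' _ _ ha₁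
  have hca : c < a := lt_max'_of_mem_erase_max' _ _ hc₂
  have ha : a ∈ s := mem_of_mem_erase ha₁
  have hc : c ∈ s := mem_of_mem_erase (mem_of_mem_erase hc₂)
  have hprod_a : ∏ u ∈ s.erase a, (a - u) < 0 := by
    rw [← mul_prod_erase _ _ (mem_erase.2 ⟨hab.ne', hb⟩), erase_right_comm]
    exact mul_neg_of_neg_of_pos (sub_neg.2 hab)
      (prod_pos fun u hu => sub_pos.2 (lt_max'_of_mem_erase_max' _ _ hu))
  have hprod_c : 0 < ∏ u ∈ s.erase c, (c - u) := by
    rw [← mul_prod_erase _ _ (mem_erase.2 ⟨(hca.trans hab).ne', hb⟩),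
      ← mul_prod_erase _ _ (mem_erase.2 ⟨hab.ne, mem_erase.2 ⟨hca.ne', ha⟩⟩),
      erase_right_comm (s := s) (a := c), erase_right_comm (a := c) (b := a)]
    exact mul_pos_of_neg_of_neg (sub_neg.2 (hca.trans hab))
      (mul_neg_of_neg_of_pos (sub_neg.2 hca)
        (prod_pos fun u hu => sub_pos.2 (lt_max'_of_mem_erase_max' _ _ hu)))
  obtain ⟨γa, hγa, heqa⟩ := hs a ha
  obtain ⟨γc, hγc, heqc⟩ := hs c hc
  have hpow_a : a ^ (#s - 1) < 0 := neg_of_mul_neg_right (heqa ▸ hprod_a) hγa.le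
  have hpow_c : 0 < c ^ (#s - 1) := pos_of_mul_pos_right (heqc ▸ hprod_c) hγc.le
  have hodd : Odd (#s - 1) := Nat.not_even_iff_odd.1 fun he => (he.pow_nonneg a).not_gt hpow_a
  exact (hodd.strictMono_pow hca).not_gt (hpow_a.trans hpow_c)

theorem card_le_two_of_prod_erase_sub_apply_eq {ι : Type*} [DecidableEq ι] (T : Finset ι)
    (x c : ι → K)     (hc : ∀ m ∈ T, 0 < c m) (hx : ∀ m ∈ T, x m ≠ 0)
    (H : ∀ m ∈ T, ∏ j ∈ T.erase m, (x m - x j) = c m * x m ^ (#T - 1)) : #T ≤ 2 := by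
  have hinj : Set.InjOn x T := by
    intro a ha b hb hab
    by_contra hne
    have hzero := H a ha
    rw [prod_eq_zero (mem_erase.2 ⟨Ne.symm hne, hb⟩) (by rw [hab, sub_self])] at hzero
    exact mul_ne_zero (hc a ha).ne' (pow_ne_zero _ (hx a ha)) hzero.symm
  have himage : ∀ m ∈ T, (T.image x).erase (x m) = (T.erase m).image x := by
    intro m hm
    ext u
    simp only [mem_erase, mem_image]
    constructor
    · rintro ⟨hu, j, hj, rfl⟩
      exact ⟨j, ⟨fun hjm => hu (hjm ▸ rfl), hj⟩, rfl⟩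
    · rintro ⟨j, ⟨hjm, hj⟩, rfl⟩
      exact ⟨fun h => hjm (hinj hj hm h), j, hj, rfl⟩
  rw [← card_image_of_injOn hinj]
  refine card_le_two_of_prod_erase_sub_eq _ ?_
  simp only [mem_image, forall_exists_index, and_imp]
  rintro _ m hm rfl
  refine ⟨c m, hc m hm, ?_⟩
  rw [himage m hm, prod_image (hinj.mono (erase_subset m T)), card_image_of_injOn hinj, H m hm]

theorem sum_mul_eq_zero_of_prod_erase_sub_apply_eq {ι : Type*} [DecidableEq ι]
    (T : Finset ι) (n x : ι → K) (S : K)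
    (hnS : ∀ m ∈ T, 1 < n m * S) (hx : ∀ m ∈ T, x m ≠ 0)
    (H : ∀ m ∈ T, ∏ j ∈ T.erase m, (x m - x j) = n m * S * x m ^ (#T - 1)) :
    ∑ m ∈ T, n m * x m = 0 := by
  have hcard := card_le_two_of_prod_erase_sub_apply_eq T x (fun m => n m * S)
    (fun m hm => one_pos.trans (hnS m hm)) hx H
  interval_cases hk : #T
  · rw [card_eq_zero.1 hk, sum_empty]
  · obtain ⟨m, rfl⟩ := card_eq_one.1 hk
    have hm := H m (mem_singleton_self m)
    rw [erase_singleton, prod_empty, Nat.sub_self, pow_zero, mul_one] at hm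
    exact absurd hm (hnS m (mem_singleton_self m)).ne
  · obtain ⟨a, b, hab, rfl⟩ := card_eq_two.1 hk
    have ha := H a (mem_insert_self a {b})
    have hb := H b (mem_insert_of_mem (mem_singleton_self b))
    rw [erase_insert (notMem_singleton.2 hab), prod_singleton] at ha
    rw [pair_comm, erase_insert (notMem_singleton.2 hab.symm), prod_singleton] at hb
    simp only [Nat.reduceSub, pow_one] at ha hb
    have hS : S ≠ 0 := right_ne_zero_of_mul (one_pos.trans (hnS a (mem_insert_self a {b}))).ne'
    rw [sum_pair hab]
    exact mul_left_cancel₀ hS (by linear_combination -(ha + hb))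

theorem one_lt_mul_sum_one_div {ι : Type*} [Fintype ι] [Nontrivial ι] (n : ι → K)
    (hn : ∀ j, 0 < n j) (m : ι) :
    1 < n m * ∑ i, 1 / n i := by
  obtain ⟨j, hj⟩ := exists_ne m
  calc 1 = n m * (1 / n m) := by rw [mul_one_div_cancel (hn m).ne']
    _ < n m * ∑ i, 1 / n i := mul_lt_mul_of_pos_left
      (single_lt_sum hj (mem_univ m) (mem_univ j) (one_div_pos.2 (hn j))
        fun k _ _ => (one_div_pos.2 (hn k)).le) (hn m)

end LinearOrderedField

/-- Key algebraic lemma: if `h j = Q j / n j` with `n j > 0` satisfy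
`(1/n m) * ∏_{j ≠ m} (h m - h j) = (∑ i, 1/n i) * h m ^ (r-1)` for every `m`,
then `∑ j, Q j = 0`. -/
theorem sum_Q_eq_zero (r : ℕ) (hr : 2 ≤ r) (n Q : Fin r → ℝ)
    (hn : ∀ j, 0 < n j)
    (h : Fin r → ℝ) (hh : ∀ j, h j = Q j / n j)
    (heq : ∀ m, (1 / n m) * ∏ j ∈ univ.erase m, (h m - h j) =
      (∑ i, 1 / n i) * h m ^ (r - 1)) :
    ∑ j, Q j = 0 := by
  have : Nontrivial (Fin r) := Fin.nontrivial_iff_two_le.2 hr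
  have hQ : ∀ j, Q j = n j * h j := fun j => by rw [hh, mul_div_cancel₀ _ (hn j).ne']
  have hprod : ∀ m, ∏ j ∈ univ.erase m, (h m - h j) =
      n m * (∑ i, 1 / n i) * h m ^ (Fintype.card (Fin r) - 1) := fun m => by
    rw [Fintype.card_fin, mul_assoc, ← heq m, ← mul_assoc, mul_one_div_cancel (hn m).ne', one_mul]
  calc ∑ j, Q j = ∑ j ∈ univ.filter (h · ≠ 0), n j * h j := by
        simp_rw [hQ]
        exact (sum_filter_of_ne fun j _ hj => right_ne_zero_of_mul hj).symm
    _ = 0 := sum_mul_eq_zero_of_prod_erase_sub_apply_eq _ n h _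
        (fun m _ => one_lt_mul_sum_one_div n hn m) (fun m hm => (mem_filter.1 hm).2)
        fun m hm => prod_erase_filter_ne_zero_sub_eq h _ (mem_filter.1 hm).2 (hprod m)
end

section
/- Let r ≥ 3, let n_1,…,n_r be positive reals, and let h_1 ≥ h_2 ≥ … ≥ h_r be reals satisfying, for each m, (1/n_m)·∏_{j≠m}(h_m − h_j) = (∑_{i=1}^r 1/n_i)·h_m^{r−1}. Then h_1 = h_2 = … = h_r = 0. -/
open Finset

set_option maxHeartbeats 1000000 in
/-- If `r ≥ 3`, `n j > 0`, `h` is nonincreasing and satisfies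
`(1/n m) * ∏_{j ≠ m} (h m - h j) = (∑ i, 1/n i) * h m ^ (r-1)` for every `m`,
then all `h j` vanish. -/
theorem h_all_zero (r : ℕ) (hr : 3 ≤ r) (n h : Fin r → ℝ)
    (hn : ∀ j, 0 < n j)
    (hmono : ∀ i j : Fin r, i ≤ j → h j ≤ h i)
    (heq : ∀ m, (1 / n m) * ∏ j ∈ univ.erase m, (h m - h j) =
      (∑ i, 1 / n i) * h m ^ (r - 1)) :
    ∀ j, h j = 0 := by
  set S := ∑ i, 1 / n i with hS
  have hninv : ∀ j : Fin r, 0 < 1 / n j := fun j => one_div_pos.mpr (hn j)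
  set i0 : Fin r := ⟨0, by omega⟩ with hi0
  set i1 : Fin r := ⟨1, by omega⟩ with hi1
  set im : Fin r := ⟨r - 2, by omega⟩ with him
  set il : Fin r := ⟨r - 1, by omega⟩ with hil
  have hSpos : 0 < S := Finset.sum_pos (fun i _ => hninv i) ⟨i0, mem_univ _⟩
  have hcard : (univ : Finset (Fin r)).card = r := by simp
  -- Step 1 : h i1 ≤ 0
  have h1le : h i1 ≤ 0 := by
    by_contra hc
    push_neg at hc
    have hkey := heq i1
    have hmem : i0 ∈ univ.erase i1 := by
      simp [hi0, hi1, Fin.ext_iff]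
    rw [← Finset.mul_prod_erase _ _ hmem] at hkey
    have hrest : 0 ≤ ∏ j ∈ (univ.erase i1).erase i0, (h i1 - h j) := by
      apply Finset.prod_nonneg
      intro j hj
      simp only [Finset.mem_erase] at hj
      have hj0 : j.val ≠ 0 := fun hh => hj.1 (Fin.ext (by simpa [hi0] using hh))
      have : i1 ≤ j := by rw [Fin.le_def]; simp [hi1]; omega
      have := hmono i1 j this
      linarith
    have hfirst : h i1 - h i0 ≤ 0 := by
      have := hmono i0 i1 (by rw [Fin.le_def]; simp [hi0, hi1])
      linarith
    have hpow : 0 < h i1 ^ (r - 1) := pow_pos hc _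
    nlinarith [mul_pos hSpos hpow, mul_nonneg (hninv i1).le (mul_nonneg (neg_nonneg.2 hfirst) hrest)]
  -- Step 2 : 0 ≤ h im
  have hmge : 0 ≤ h im := by
    by_contra hc
    push_neg at hc
    have hkey := heq im
    have hmeml : il ∈ univ.erase im := by
      simp [hil, him, Fin.ext_iff]; omega
    rw [← Finset.mul_prod_erase _ _ hmeml] at hkey
    have hcardT : ((univ.erase im).erase il).card = r - 2 := by
      rw [Finset.card_erase_of_mem hmeml, Finset.card_erase_of_mem (mem_univ im), hcard]
      omega
    have hQ : ∏ j ∈ (univ.erase im).erase il, (h im - h j) = (-1 : ℝ) ^ (r - 2) * ∏ j ∈ (univ.erase im).erase il, (h j - h im) := by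
      rw [← hcardT, ← Finset.prod_const, ← Finset.prod_mul_distrib]
      exact Finset.prod_congr rfl (fun j _ => by ring)
    have hA : 0 ≤ ∏ j ∈ (univ.erase im).erase il, (h j - h im) := by
      apply Finset.prod_nonneg
      intro j hj
      simp only [Finset.mem_erase] at hj
      have hj1 : j.val ≠ r - 1 := fun hh => hj.1 (Fin.ext (by simpa [hil] using hh))
      have hj2 : j.val ≠ r - 2 := fun hh => hj.2.1 (Fin.ext (by simpa [him] using hh))
      have : j ≤ im := by rw [Fin.le_def]; simp [him]; omega
      have := hmono j im this
      linarith
    have hd : 0 ≤ h im - h il := by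
      have := hmono im il (by rw [Fin.le_def]; simp [him, hil]; omega)
      linarith
    have hrw : h im ^ (r - 1) = (-1 : ℝ) ^ (r - 2) * ((-h im) ^ (r - 2) * h im) := by
      have h1 : r - 1 = (r - 2) + 1 := by omega
      have hk : h im ^ (r - 2) = (-1 : ℝ) ^ (r - 2) * (-h im) ^ (r - 2) := by
        rw [← mul_pow]; norm_num
      rw [h1, pow_succ, hk]; ring
    rw [hQ, hrw] at hkey
    have hB : 0 < (-h im) ^ (r - 2) := pow_pos (by linarith) _
    rcases Nat.even_or_odd (r - 2) with hpar | hpar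
    · rw [hpar.neg_one_pow] at hkey
      nlinarith [mul_nonneg (hninv im).le (mul_nonneg hd hA), mul_pos (mul_pos hSpos hB) (show 0 < -h im by linarith)]
    · rw [hpar.neg_one_pow] at hkey
      nlinarith [mul_nonneg (hninv im).le (mul_nonneg hd hA), mul_pos (mul_pos hSpos hB) (show 0 < -h im by linarith)]
  -- middle values vanish
  have hmid : ∀ j : Fin r, 1 ≤ j.val → j.val ≤ r - 2 → h j = 0 := by
    intro j hj1 hj2
    have hle1 : h j ≤ h i1 := hmono i1 j (by rw [Fin.le_def]; simp [hi1]; omega)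
    have hlem : h im ≤ h j := hmono j im (by rw [Fin.le_def]; simp [him]; omega)
    linarith
  have h1eq : h i1 = 0 := hmid i1 (by simp [hi1]) (by simp [hi1]; omega)
  have h0ge : 0 ≤ h i0 := by
    have := hmono i0 i1 (by rw [Fin.le_def]; simp [hi0, hi1])
    linarith
  have hmeq : h im = 0 := hmid im (by simp [him]; omega) (by simp [him])
  have hlle : h il ≤ 0 := by
    have := hmono im il (by rw [Fin.le_def]; simp [him, hil]; omega)
    linarith
  -- sum splits
  have hmem0 : il ∈ univ.erase i0 := by simp [hil, hi0, Fin.ext_iff]; omega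
  have hmeml0 : i0 ∈ univ.erase il := by simp [hil, hi0, Fin.ext_iff]; omega
  have hsum1 : 1 / n i0 + ∑ j ∈ univ.erase i0, 1 / n j = S := by
    rw [hS]; exact Finset.add_sum_erase _ (fun j => 1 / n j) (mem_univ i0)
  have hsum2 : 1 / n il + ∑ j ∈ (univ.erase i0).erase il, 1 / n j = ∑ j ∈ univ.erase i0, 1 / n j :=
    Finset.add_sum_erase _ (fun j => 1 / n j) hmem0
  have hi1mem : i1 ∈ (univ.erase i0).erase il := by
    simp [hi0, hi1, hil, Fin.ext_iff]; omega
  have hsum3 : 0 < ∑ j ∈ (univ.erase i0).erase il, 1 / n j :=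
    Finset.sum_pos (fun j _ => hninv j) ⟨i1, hi1mem⟩
  have hSgt : 1 / n i0 + 1 / n il < S := by linarith
  -- middle zero inside the two erased sets
  have hzero0 : ∀ j ∈ (univ.erase i0).erase il, h j = 0 := by
    intro j hj
    simp only [Finset.mem_erase] at hj
    have hj1 : j.val ≠ r - 1 := fun hh => hj.1 (Fin.ext (by simpa [hil] using hh))
    have hj2 : j.val ≠ 0 := fun hh => hj.2.1 (Fin.ext (by simpa [hi0] using hh))
    exact hmid j (by omega) (by omega)
  have hzerol : ∀ j ∈ (univ.erase il).erase i0, h j = 0 := by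
    intro j hj
    simp only [Finset.mem_erase] at hj
    have hj1 : j.val ≠ 0 := fun hh => hj.1 (Fin.ext (by simpa [hi0] using hh))
    have hj2 : j.val ≠ r - 1 := fun hh => hj.2.1 (Fin.ext (by simpa [hil] using hh))
    exact hmid j (by omega) (by omega)
  have hcard0 : ((univ.erase i0).erase il).card = r - 2 := by
    rw [Finset.card_erase_of_mem hmem0, Finset.card_erase_of_mem (mem_univ i0), hcard]; omega
  have hcardl : ((univ.erase il).erase i0).card = r - 2 := by
    rw [Finset.card_erase_of_mem hmeml0, Finset.card_erase_of_mem (mem_univ il), hcard]; omega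
  have hr21 : r - 1 = (r - 2) + 1 := by omega
  -- Step 3 : h i0 = 0
  have h0eq : h i0 = 0 := by
    by_contra hc
    have h0pos : 0 < h i0 := h0ge.lt_of_ne (Ne.symm hc)
    have hkey0 := heq i0
    rw [← Finset.mul_prod_erase _ _ hmem0] at hkey0
    have hprod0 : ∏ j ∈ (univ.erase i0).erase il, (h i0 - h j) = h i0 ^ (r - 2) := by
      rw [Finset.prod_congr rfl (fun j hj => by rw [hzero0 j hj, sub_zero]),
        Finset.prod_const, hcard0]
    rw [hprod0, hr21, pow_succ] at hkey0
    have hne0 : h i0 ^ (r - 2) ≠ 0 := pow_ne_zero _ h0pos.ne'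
    have E0 : (1 / n i0) * (h i0 - h il) = S * h i0 := by
      apply mul_right_cancel₀ hne0
      linear_combination hkey0
    have hlneg : h il < 0 := by
      nlinarith [mul_pos (show (0:ℝ) < S - 1 / n i0 by have := hninv il; linarith) h0pos, hninv i0]
    have hkeyl := heq il
    rw [← Finset.mul_prod_erase _ _ hmeml0] at hkeyl
    have hprodl : ∏ j ∈ (univ.erase il).erase i0, (h il - h j) = h il ^ (r - 2) := by
      rw [Finset.prod_congr rfl (fun j hj => by rw [hzerol j hj, sub_zero]),
        Finset.prod_const, hcardl]
    rw [hprodl, hr21, pow_succ] at hkeyl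
    have hnel : h il ^ (r - 2) ≠ 0 := pow_ne_zero _ hlneg.ne
    have El : (1 / n il) * (h il - h i0) = S * h il := by
      apply mul_right_cancel₀ hnel
      linear_combination hkeyl
    nlinarith [mul_pos (show (0:ℝ) < S - (1 / n i0 + 1 / n il) by linarith)
        (show (0:ℝ) < h i0 - h il by linarith)]
  -- Step 4 : h il = 0
  have hleq : h il = 0 := by
    by_contra hc
    have hlneg : h il < 0 := hlle.lt_of_ne hc
    have hkeyl := heq il
    have hprodl : ∏ j ∈ univ.erase il, (h il - h j) = h il ^ (r - 1) := by
      have hz : ∀ j ∈ univ.erase il, h j = 0 := by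
        intro j hj
        simp only [Finset.mem_erase] at hj
        have hj1 : j.val ≠ r - 1 := fun hh => hj.1 (Fin.ext (by simpa [hil] using hh))
        rcases Nat.eq_zero_or_pos j.val with h0 | h0
        · have : j = i0 := Fin.ext (by simpa [hi0] using h0)
          rw [this]; exact h0eq
        · exact hmid j h0 (by omega)
      rw [Finset.prod_congr rfl (fun j hj => by rw [hz j hj, sub_zero]),
        Finset.prod_const, Finset.card_erase_of_mem (mem_univ il), hcard]
    rw [hprodl] at hkeyl
    have hnel : h il ^ (r - 1) ≠ 0 := pow_ne_zero _ hlneg.ne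
    have : 1 / n il = S := mul_right_cancel₀ hnel hkeyl
    have hsum1' : 1 / n il + ∑ j ∈ univ.erase il, 1 / n j = S := by
      rw [hS]; exact Finset.add_sum_erase _ (fun j => 1 / n j) (mem_univ il)
    have : 0 < ∑ j ∈ univ.erase il, 1 / n j :=
      Finset.sum_pos (fun j _ => hninv j) ⟨i0, hmeml0⟩
    linarith
  -- conclusion
  intro j
  have hle : h j ≤ h i0 := hmono i0 j (by rw [Fin.le_def]; simp [hi0])
  have hge : h il ≤ h j := hmono j il (by rw [Fin.le_def]; simp [hil]; omega)
  linarith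
end

section
/- In a graph G consisting of r ≥ 2 odd cycles of lengths n_1,…,n_r glued together at a single common vertex, the spanning subgraphs with all |V| vertices and |V| edges that are odd saturated forests are exactly the connected subgraphs obtained by deleting one edge from each of r−1 of the cycles; in particular there are exactly ∑_{i=1}^r ∏_{j≠i} n_j such subgraphs. -/
namespace Multigraph

/-- `G` is connected. -/
def Preconnected (G : Multigraph) : Prop := ∀ u v, Relation.EqvGen G.Adj u v

/-- The spanning subgraph of `G` obtained by keeping the edges in `S`. -/
def keep (G : Multigraph) (S : Finset G.E) [DecidableEq G.E] : Multigraph where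
  V := G.V
  E := {e // e ∈ S}
  fst e := G.fst e.1
  snd e := G.snd e.1

end Multigraph

open Multigraph

/-- The graph consisting of `r` cycles of lengths `n 0, …, n (r-1)` glued together
at a common vertex (`none` is the common vertex, the vertex `some ⟨j, k⟩` is the
`(k+1)`-st vertex of the `j`-th cycle, and the edge `⟨j, k⟩` joins the `k`-th and
`(k+1)`-st vertices of the `j`-th cycle, indices mod `n j`). -/
def gluedCycles (r : ℕ) (n : Fin r → ℕ) (hpos : ∀ j, 0 < n j) : Multigraph where
  V := Option (Σ j : Fin r, Fin (n j - 1))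
  E := Σ j : Fin r, Fin (n j)
  fst e := if h : (e.2 : ℕ) = 0 then none else
    some ⟨e.1, ⟨(e.2 : ℕ) - 1, by omega⟩⟩
  snd e := if h : ((e.2 : ℕ) + 1) % n e.1 = 0 then none else
    some ⟨e.1, ⟨((e.2 : ℕ) + 1) % n e.1 - 1, by
      have := Nat.mod_lt ((e.2 : ℕ) + 1) (hpos e.1); omega⟩⟩

instance (r : ℕ) (n : Fin r → ℕ) (hpos : ∀ j, 0 < n j) :
    DecidableEq (gluedCycles r n hpos).E :=
  inferInstanceAs (DecidableEq (Σ j : Fin r, Fin (n j)))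

/-!
Deleting `r - 1` edges leaves as many edges as vertices. If two deleted edges `a`, `b` lie on
the same cycle, the vertices strictly between them form a union of components avoiding the common
vertex; there `fst` is injective but misses the first endpoint of `b`, so such a component has
fewer edges than vertices. Hence a saturated forest arises by deleting at most one, and so by
counting exactly one, edge on every cycle but one, say the `i`-th. Conversely such a deletion
leaves a connected graph, saturated since `|V| = |E|`; and a cycle in it has two edges at each of
its vertices other than the common one, so it runs around a whole glued cycle, which can only be
the intact odd `i`-th one. Choosing one edge on each cycle `j ≠ i` gives the count.
-/

namespace Finset

variable {ι : Type*} [DecidableEq ι] {α : ι → Type*}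

noncomputable def sigmaEquivPi [Fintype ι] : Finset (Σ j, α j) ≃ ∀ j, Finset (α j) where
  toFun D j := D.preimage (Sigma.mk j) sigma_mk_injective.injOn
  invFun F := univ.sigma F
  left_inv D := by ext ⟨j, a⟩; simp
  right_inv F := by ext j a; simp

lemma card_filter_fst_eq_card_preimage (D : Finset (Σ j, α j)) (j : ι) :
    (D.filter (fun e => e.1 = j)).card =
      (D.preimage (Sigma.mk j) sigma_mk_injective.injOn).card := by
  rw [← card_map (Function.Embedding.sigmaMk j)]
  congr 1
  ext ⟨j', a⟩
  simp only [mem_filter, mem_map, mem_preimage, Function.Embedding.sigmaMk_apply]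
  constructor
  · rintro ⟨h, rfl⟩; exact ⟨a, h, rfl⟩
  · rintro ⟨b, h, hb⟩; cases hb; exact ⟨h, rfl⟩

lemma card_eq_sum_card_filter_fst [Fintype ι] (D : Finset (Σ j, α j)) :
    D.card = ∑ j, (D.filter (fun e => e.1 = j)).card :=
  card_eq_sum_card_fiberwise fun e _ => mem_univ e.1

lemma forall_card_filter_fst_eq_ite_iff (D : Finset (Σ j, α j)) (i : ι) :
    (∀ j, (D.filter (fun e => e.1 = j)).card = if j = i then 0 else 1) ↔
      (∀ e ∈ D, e.1 ≠ i) ∧ ∀ j, j ≠ i → (D.filter (fun e => e.1 = j)).card = 1 := by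
  simp only [← filter_eq_empty_iff, ← card_eq_zero]
  constructor
  · intro h
    exact ⟨by simpa using h i, fun j hj => by simpa [hj] using h j⟩
  · rintro ⟨h₀, h₁⟩ j
    split_ifs with hj
    · exact hj ▸ h₀
    · exact h₁ j hj

lemma card_filter_fst_univ [Fintype ι] [∀ j, Fintype (α j)] (j : ι) :
    ((univ : Finset (Σ j, α j)).filter (fun e => e.1 = j)).card = Fintype.card (α j) := by
  rw [card_filter_fst_eq_card_preimage]
  simp

variable [Fintype ι] [∀ j, Fintype (α j)]

lemma card_forall_card_filter_fst_eq (c : ι → ℕ) :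
    Fintype.card {D : Finset (Σ j, α j) // ∀ j, (D.filter (fun e => e.1 = j)).card = c j} =
      ∏ j, (Fintype.card (α j)).choose (c j) := by
  calc _ = Fintype.card {F : ∀ j, Finset (α j) // ∀ j, (F j).card = c j} :=
        Fintype.card_congr <| sigmaEquivPi.subtypeEquiv fun D => by
          simp only [card_filter_fst_eq_card_preimage]; rfl
    _ = Fintype.card (∀ j, {s : Finset (α j) // s.card = c j}) :=
        Fintype.card_congr (Equiv.subtypePiEquivPi (p := fun j (s : Finset (α j)) => s.card = c j))
    _ = _ := by simp [Fintype.card_pi]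

lemma card_exists_forall_card_filter_fst_eq_ite [∀ j, DecidableEq (α j)] :
    Nat.card {D : Finset (Σ j, α j) //
        ∃ i, ∀ j, (D.filter (fun e => e.1 = j)).card = if j = i then 0 else 1} =
      ∑ i, ∏ j ∈ univ.erase i, Fintype.card (α j) := by
  have hsplit : univ.filter (fun D : Finset (Σ j, α j) =>
        ∃ i, ∀ j, (D.filter (fun e => e.1 = j)).card = if j = i then 0 else 1) =
      univ.biUnion fun i => univ.filter fun D : Finset (Σ j, α j) =>
        ∀ j, (D.filter (fun e => e.1 = j)).card = if j = i then 0 else 1 := by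
    ext D; simp
  rw [Nat.card_eq_fintype_card, Fintype.card_subtype, hsplit, card_biUnion]
  · refine sum_congr rfl fun i _ => ?_
    rw [← Fintype.card_subtype, card_forall_card_filter_fst_eq, ← mul_prod_erase _ _ (mem_univ i)]
    simp only [if_pos, Nat.choose_zero_right, one_mul]
    exact prod_congr rfl fun j hj => by simp [(mem_erase.mp hj).1]
  · intro i _ i' _ hii'
    refine disjoint_filter.mpr fun D _ hi hi' => ?_
    have := (hi i).symm.trans (hi' i)
    rw [if_pos rfl, if_neg hii'] at this
    exact zero_ne_one this

end Finset

lemma Fintype.exists_eq_ite_of_sum_eq_card_sub_one {ι : Type*} [Fintype ι] [DecidableEq ι]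
    [Nonempty ι] {c : ι → ℕ} (hc : ∀ j, c j ≤ 1) (hsum : ∑ j, c j = Fintype.card ι - 1) :
    ∃ i, ∀ j, c j = if j = i then 0 else 1 := by
  obtain ⟨i, hi⟩ : ∃ i, c i = 0 := by
    by_contra! h
    have : ∑ j, c j = ∑ _j : ι, 1 :=
      Finset.sum_congr rfl fun j _ => le_antisymm (hc j) (Nat.one_le_iff_ne_zero.mpr (h j))
    rw [this, Finset.sum_const, Finset.card_univ, smul_eq_mul, mul_one] at hsum
    have := Fintype.card_pos (α := ι)
    omega
  have hrest : ∑ j ∈ Finset.univ.erase i, c j = ∑ j ∈ Finset.univ.erase i, 1 := by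
    rw [← Finset.add_sum_erase _ _ (Finset.mem_univ i), hi, zero_add] at hsum
    simp [hsum, Finset.card_erase_of_mem]
  refine ⟨i, fun j => ?_⟩
  split_ifs with hj
  · exact hj ▸ hi
  · exact (Finset.sum_eq_sum_iff_of_le fun j _ => hc j).mp hrest j (by simpa using hj)

namespace Multigraph

variable {G : Multigraph}

lemma Adj.symm {u v : G.V} (h : G.Adj u v) : G.Adj v u :=
  let ⟨e, he⟩ := h; ⟨e, he.symm⟩

lemma eqvGen_adj_iff_of_closed {P : G.V → Prop} (hP : ∀ u v, G.Adj u v → P u → P v) {u v : G.V}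
    (h : Relation.EqvGen G.Adj u v) : P u ↔ P v := by
  induction h with
  | rel x y hxy => exact ⟨hP x y hxy, hP y x hxy.symm⟩
  | refl => exact Iff.rfl
  | symm _ _ _ ih => exact ih.symm
  | trans _ _ _ _ _ ih₁ ih₂ => exact ih₁.trans ih₂

lemma IsSaturatedForest.of_preconnected (h : G.Preconnected)
    (hcard : Nat.card G.V = Nat.card G.E) : G.IsSaturatedForest := by
  intro K
  induction K using Quotient.inductionOn with | h w => ?_
  have hw : ∀ v, Quotient.mk G.compSetoid v = Quotient.mk G.compSetoid w :=
    fun v => Quotient.sound (h v w)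
  rwa [Nat.card_congr (Equiv.subtypeUnivEquiv hw),
    Nat.card_congr (Equiv.subtypeUnivEquiv fun e => hw (G.fst e))]

lemma IsSaturatedForest.exists_fst_eq (h : G.IsSaturatedForest) (v : G.V)
    (hinj : Set.InjOn G.fst
      {e | Quotient.mk G.compSetoid (G.fst e) = Quotient.mk G.compSetoid v}) :
    ∃ e, G.fst e = v := by
  set K := Quotient.mk G.compSetoid v
  let F : {e // Quotient.mk G.compSetoid (G.fst e) = K} → {w // Quotient.mk G.compSetoid w = K} :=
    fun e => ⟨G.fst e, e.2⟩
  have hF : Function.Injective F := fun e e' hee' =>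
    Subtype.ext (hinj e.2 e'.2 (congrArg Subtype.val hee'))
  obtain ⟨e, he⟩ := (hF.bijective_of_nat_card_le (h K).le).2 ⟨v, rfl⟩
  exact ⟨e, congrArg Subtype.val he⟩

lemma IsCycle.of_keep [DecidableEq G.E] {S : Finset G.E} {l : ℕ} {c : ZMod l → G.V}
    {f : ZMod l → (G.keep S).E} (h : (G.keep S).IsCycle l c f) :
    G.IsCycle l c (fun m => (f m).1) :=
  ⟨h.1, h.2.1, Subtype.val_injective.comp h.2.2.1, h.2.2.2⟩

lemma IsCycle.exists_ne_incident {l : ℕ} {c : ZMod l → G.V} {f : ZMod l → G.E}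
    (h : G.IsCycle l c f) (hl : 2 ≤ l) {m : ZMod l} {v : G.V}
    (hv : G.fst (f m) = v ∨ G.snd (f m) = v) :
    ∃ m', f m' ≠ f m ∧ (G.fst (f m') = v ∨ G.snd (f m') = v) := by
  have : Fact (1 < l) := ⟨hl⟩
  have hv' : v = c m ∨ v = c (m + 1) := by
    rcases h.2.2.2 m with ⟨h₁, h₂⟩ | ⟨h₁, h₂⟩ <;> rcases hv with rfl | rfl <;> tauto
  rcases hv' with rfl | rfl
  · refine ⟨m - 1, fun he => ?_, ?_⟩
    · exact one_ne_zero (sub_eq_self.mp (h.2.2.1 he))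
    · rcases h.2.2.2 (m - 1) with ⟨-, h₂⟩ | ⟨h₁, -⟩ <;> simp_all
  · refine ⟨m + 1, fun he => ?_, ?_⟩
    · exact one_ne_zero (add_eq_left.mp (h.2.2.1 he))
    · rcases h.2.2.2 (m + 1) with ⟨h₁, -⟩ | ⟨-, h₂⟩ <;> simp_all

end Multigraph

namespace gluedCycles

variable {r : ℕ} {n : Fin r → ℕ} {hpos : ∀ j, 0 < n j}

-- The `p`-th vertex along cycle `j`, so that edge `⟨j, k⟩` joins positions `k` and `k + 1`;
-- positions `0` and `n j` (and, as junk, all larger ones) are the common vertex `none`.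
def vertex (n : Fin r → ℕ) (j : Fin r) (p : ℕ) : Option (Σ j : Fin r, Fin (n j - 1)) :=
  if h : p = 0 ∨ n j ≤ p then none else some ⟨j, ⟨p - 1, by omega⟩⟩

lemma vertex_eq_none_iff {j : Fin r} {p : ℕ} : vertex n j p = none ↔ p = 0 ∨ n j ≤ p := by
  unfold vertex; split_ifs <;> simp_all

lemma vertex_zero (j : Fin r) : vertex n j 0 = none := vertex_eq_none_iff.mpr (Or.inl rfl)

lemma vertex_self (j : Fin r) : vertex n j (n j) = none := vertex_eq_none_iff.mpr (Or.inr le_rfl)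

lemma vertex_inj {j j' : Fin r} {p p' : ℕ} (hp : 0 < p) (hpn : p < n j) :
    vertex n j' p' = vertex n j p ↔ j' = j ∧ p' = p := by
  constructor
  · intro h
    have h' : ¬ (p' = 0 ∨ n j' ≤ p') := fun h₀ =>
      (vertex_eq_none_iff.not.mpr (by omega) : vertex n j p ≠ none)
        (h ▸ vertex_eq_none_iff.mpr h₀)
    unfold vertex at h
    rw [dif_neg h', dif_neg (by omega)] at h
    simp only [Option.some.injEq, Sigma.mk.injEq] at h
    obtain ⟨rfl, h⟩ := h
    have hval : p' - 1 = p - 1 := Fin.val_eq_of_eq (eq_of_heq h)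
    exact ⟨rfl, by omega⟩
  · rintro ⟨rfl, rfl⟩; rfl

lemma some_eq_vertex (j : Fin r) (t : Fin (n j - 1)) :
    (some ⟨j, t⟩ : Option (Σ j : Fin r, Fin (n j - 1))) = vertex n j (t + 1) := by
  unfold vertex; rw [dif_neg (by omega)]; rfl

lemma edge_ext {e e' : (gluedCycles r n hpos).E} (h₁ : e.1 = e'.1) (h₂ : (e.2 : ℕ) = e'.2) :
    e = e' := by
  obtain ⟨j, k⟩ := e; obtain ⟨j', k'⟩ := e'
  subst h₁
  obtain rfl : k = k' := Fin.ext h₂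
  rfl

lemma fst_eq_vertex (e : (gluedCycles r n hpos).E) :
    (gluedCycles r n hpos).fst e = vertex n e.1 e.2 := by
  unfold vertex; simp only [gluedCycles]; split_ifs <;> first | rfl | omega

lemma snd_eq_vertex (e : (gluedCycles r n hpos).E) :
    (gluedCycles r n hpos).snd e = vertex n e.1 (e.2 + 1) := by
  obtain ⟨j, k⟩ := e
  unfold vertex; simp only [gluedCycles]
  rcases Nat.lt_or_ge (k + 1) (n j) with h | h
  · simp only [Nat.mod_eq_of_lt h]
    rw [dif_neg (by omega), dif_neg (by omega)]
  · simp only [show (k : ℕ) + 1 = n j by omega, Nat.mod_self]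
    rw [dif_pos trivial, dif_pos (by omega)]

lemma fst_eq_vertex_iff {e : (gluedCycles r n hpos).E} {j : Fin r} {p : ℕ} (hp : 0 < p)
    (hpn : p < n j) : (gluedCycles r n hpos).fst e = vertex n j p ↔ e.1 = j ∧ (e.2 : ℕ) = p := by
  rw [fst_eq_vertex]; exact vertex_inj hp hpn

lemma snd_eq_vertex_iff {e : (gluedCycles r n hpos).E} {j : Fin r} {p : ℕ} (hp : 0 < p)
    (hpn : p < n j) :
    (gluedCycles r n hpos).snd e = vertex n j p ↔ e.1 = j ∧ (e.2 : ℕ) + 1 = p := by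
  rw [snd_eq_vertex]; exact vertex_inj hp hpn

lemma incident_vertex_iff {e : (gluedCycles r n hpos).E} {j : Fin r} {p : ℕ} (hp : 0 < p)
    (hpn : p < n j) : ((gluedCycles r n hpos).fst e = vertex n j p ∨
      (gluedCycles r n hpos).snd e = vertex n j p) ↔
        e.1 = j ∧ ((e.2 : ℕ) = p ∨ (e.2 : ℕ) + 1 = p) := by
  rw [fst_eq_vertex_iff hp hpn, snd_eq_vertex_iff hp hpn, and_or_left]

section Cycles

variable {l : ℕ} {c : ZMod l → (gluedCycles r n hpos).V}
  {f : ZMod l → (gluedCycles r n hpos).E}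

-- The vertex shared by edges `k` and `k + 1` of cycle `j` has no other incident edges.
lemma exists_cycle_edge_iff_succ (h : (gluedCycles r n hpos).IsCycle l c f) (hl : 2 ≤ l)
    {j : Fin r} {k : ℕ} (hk : k + 1 < n j) :
    (∃ m, (f m).1 = j ∧ ((f m).2 : ℕ) = k) ↔ ∃ m, (f m).1 = j ∧ ((f m).2 : ℕ) = k + 1 := by
  have hother : ∀ m, (f m).1 = j → ((f m).2 : ℕ) = k + 1 ∨ ((f m).2 : ℕ) + 1 = k + 1 →
      ∃ m', (f m').1 = j ∧ ((f m').2 : ℕ) ≠ (f m).2 ∧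
        (((f m').2 : ℕ) = k + 1 ∨ ((f m').2 : ℕ) + 1 = k + 1) := by
    intro m hj hm
    obtain ⟨m', hne, hm'⟩ := h.exists_ne_incident hl
      ((incident_vertex_iff (by omega) hk).mpr ⟨hj, hm⟩)
    obtain ⟨hj', hm'⟩ := (incident_vertex_iff (by omega) hk).mp hm'
    exact ⟨m', hj', fun h₂ => hne (edge_ext (hj'.trans hj.symm) h₂), hm'⟩
  constructor
  · rintro ⟨m, hj, hm⟩
    obtain ⟨m', hj', hne, hm'⟩ := hother m hj (by omega)
    exact ⟨m', hj', by omega⟩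
  · rintro ⟨m, hj, hm⟩
    obtain ⟨m', hj', hne, hm'⟩ := hother m hj (by omega)
    exact ⟨m', hj', by omega⟩

lemma mem_range_iff_of_isCycle (h : (gluedCycles r n hpos).IsCycle l c f) (hl : 2 ≤ l)
    {e e' : (gluedCycles r n hpos).E} (hee' : e.1 = e'.1) :
    e ∈ Set.range f ↔ e' ∈ Set.range f := by
  have hzero : ∀ j k, k < n j →
      ((∃ m, (f m).1 = j ∧ ((f m).2 : ℕ) = k) ↔ ∃ m, (f m).1 = j ∧ ((f m).2 : ℕ) = 0) := by
    intro j k hk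
    induction k with
    | zero => rfl
    | succ k ih => exact (exists_cycle_edge_iff_succ h hl hk).symm.trans (ih (by omega))
  have hrange : ∀ e : (gluedCycles r n hpos).E,
      e ∈ Set.range f ↔ ∃ m, (f m).1 = e.1 ∧ ((f m).2 : ℕ) = e.2 := fun e =>
    ⟨fun ⟨m, hm⟩ => ⟨m, hm ▸ rfl, hm ▸ rfl⟩, fun ⟨m, h₁, h₂⟩ => ⟨m, edge_ext h₁ h₂⟩⟩
  rw [hrange, hrange, hzero _ _ e.2.2, hzero _ _ e'.2.2, hee']

end Cycles

variable {D : Finset (gluedCycles r n hpos).E}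

lemma card_vertices_eq_card_edges_keep_compl (hr : 1 ≤ r) (hD : D.card = r - 1) :
    Nat.card ((gluedCycles r n hpos).keep Dᶜ).V = Nat.card ((gluedCycles r n hpos).keep Dᶜ).E := by
  have hV : Nat.card ((gluedCycles r n hpos).keep Dᶜ).V = ∑ j, (n j - 1) + 1 := by
    simp [keep, gluedCycles, Nat.card_eq_fintype_card, Fintype.card_option]
  have hE : Nat.card ((gluedCycles r n hpos).keep Dᶜ).E = ∑ j, n j - (r - 1) := by
    rw [show ((gluedCycles r n hpos).keep Dᶜ).E = Dᶜ from rfl, Nat.card_eq_finsetCard,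
      Finset.card_compl, hD, ← Nat.card_eq_fintype_card]
    simp [gluedCycles]
  have hsum : ∑ j, n j = ∑ j, (n j - 1) + r := by
    simp [← Finset.sum_congr rfl fun j _ => Nat.sub_add_cancel (hpos j), Finset.sum_add_distrib]
  omega

lemma eqvGen_vertex_of_kept_between {j : Fin r} {a b : ℕ} (hab : a ≤ b) (hb : b ≤ n j)
    (hD : ∀ e ∈ D, e.1 = j → (e.2 : ℕ) < a ∨ b ≤ e.2) :
    Relation.EqvGen ((gluedCycles r n hpos).keep Dᶜ).Adj (vertex n j a) (vertex n j b) := by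
  induction b, hab using Nat.le_induction with
  | base => exact .refl _
  | succ b hab ih =>
    let e : (gluedCycles r n hpos).E := ⟨j, ⟨b, by omega⟩⟩
    have he : e ∉ D := fun he => by have := hD e he rfl; simp only [e] at this; omega
    refine .trans _ _ _ (ih (by omega) fun e he hej => (hD e he hej).imp_right (by omega))
      (.rel _ _ ⟨⟨e, Finset.mem_compl.mpr he⟩, Or.inl ⟨fst_eq_vertex e, snd_eq_vertex e⟩⟩)

lemma preconnected_keep_compl (hD : ∀ j, (D.filter (fun e => e.1 = j)).card ≤ 1) :
    ((gluedCycles r n hpos).keep Dᶜ).Preconnected := by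
  suffices h : ∀ v, Relation.EqvGen ((gluedCycles r n hpos).keep Dᶜ).Adj v none from
    fun u v => (h u).trans _ _ _ ((h v).symm _ _)
  rintro (_ | ⟨j, t⟩)
  · exact .refl _
  rw [some_eq_vertex]
  by_cases h : ∃ e ∈ D, e.1 = j ∧ (e.2 : ℕ) ≤ t
  · obtain ⟨e, he, rfl, het⟩ := h
    rw [← vertex_self e.1]
    refine eqvGen_vertex_of_kept_between (by omega) le_rfl fun e' he' he'j => Or.inl ?_
    obtain rfl := Finset.card_le_one.mp (hD e.1) e' (Finset.mem_filter.mpr ⟨he', he'j⟩) e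
      (Finset.mem_filter.mpr ⟨he, rfl⟩)
    omega
  · push Not at h
    rw [← vertex_zero j]
    exact .symm _ _ (eqvGen_vertex_of_kept_between (Nat.zero_le _) (by omega)
      fun e he hej => Or.inr (h e he hej))

lemma not_isSaturatedForest_keep_compl {a b : (gluedCycles r n hpos).E} (ha : a ∈ D)
    (hb : b ∈ D) (hab₁ : a.1 = b.1) (hab₂ : (a.2 : ℕ) < b.2) :
    ¬ ((gluedCycles r n hpos).keep Dᶜ).IsSaturatedForest := by
  intro h
  set H := (gluedCycles r n hpos).keep Dᶜ
  have hbn : (b.2 : ℕ) < n b.1 := b.2.2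
  -- the vertices strictly between the deleted edges `a` and `b` form a union of components
  let P : H.V → Prop := fun v => ∃ p, (a.2 : ℕ) < p ∧ p ≤ b.2 ∧ v = vertex n b.1 p
  have hP : ∀ u v, H.Adj u v → P u → P v := by
    rintro u v ⟨⟨e, he⟩, he'⟩ ⟨p, hap, hpb, rfl⟩
    have hne : ∀ e' ∈ D, e.1 = e'.1 → (e.2 : ℕ) ≠ e'.2 := fun e' he' h₁ h₂ =>
      Finset.mem_compl.mp he (edge_ext h₁ h₂ ▸ he')
    change ((gluedCycles r n hpos).fst e = _ ∧ (gluedCycles r n hpos).snd e = v) ∨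
      ((gluedCycles r n hpos).fst e = v ∧ (gluedCycles r n hpos).snd e = _) at he'
    rcases he' with ⟨hu, rfl⟩ | ⟨rfl, hu⟩
    · obtain ⟨hj, rfl⟩ := (fst_eq_vertex_iff (by omega) (by omega)).mp hu
      have := hne b hb hj
      exact ⟨e.2 + 1, by omega, by omega, (snd_eq_vertex e).trans (congrArg (vertex n · _) hj)⟩
    · obtain ⟨hj, hp⟩ := (snd_eq_vertex_iff (by omega) (by omega)).mp hu
      have := hne a ha (hj.trans hab₁.symm)
      exact ⟨e.2, by omega, by omega, (fst_eq_vertex e).trans (congrArg (vertex n · _) hj)⟩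
  have hfst : ∀ {e : H.E} {p : ℕ}, 0 < p → p < n b.1 → H.fst e = vertex n b.1 p →
      e.1.1 = b.1 ∧ (e.1.2 : ℕ) = p := fun hp hpn => (fst_eq_vertex_iff hp hpn).mp
  have hcomp : ∀ e : H.E, Quotient.mk H.compSetoid (H.fst e) =
      Quotient.mk H.compSetoid (vertex n b.1 b.2) →
        ∃ p, 0 < p ∧ p < n b.1 ∧ H.fst e = vertex n b.1 p := by
    intro e he
    obtain ⟨p, hap, hpb, hp⟩ := (eqvGen_adj_iff_of_closed hP (Quotient.exact he)).mpr
      ⟨b.2, hab₂, le_rfl, rfl⟩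
    exact ⟨p, by omega, by omega, hp⟩
  obtain ⟨e, he⟩ := h.exists_fst_eq (vertex n b.1 b.2) fun e he e' he' hee' => by
    obtain ⟨p, hp, hpn, hep⟩ := hcomp e he
    obtain ⟨p', hp', hpn', hep'⟩ := hcomp e' he'
    obtain rfl := ((vertex_inj hp' hpn').mp (hep.symm.trans (hee'.trans hep'))).2
    obtain ⟨h₁, h₂⟩ := hfst hp hpn hep
    obtain ⟨h₁', h₂'⟩ := hfst hp hpn hep'
    exact Subtype.ext (edge_ext (h₁.trans h₁'.symm) (h₂.trans h₂'.symm))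
  obtain ⟨h₁, h₂⟩ := hfst (by omega) hbn he
  exact Finset.mem_compl.mp e.2 (edge_ext h₁ h₂ ▸ hb)

lemma card_filter_fst_le_one (h : ((gluedCycles r n hpos).keep Dᶜ).IsSaturatedForest)
    (j : Fin r) : (D.filter (fun e => e.1 = j)).card ≤ 1 := by
  refine Finset.card_le_one.mpr fun a ha b hb => ?_
  rw [Finset.mem_filter] at ha hb
  by_contra hab
  have hne : (a.2 : ℕ) ≠ b.2 := fun h₂ => hab (edge_ext (ha.2.trans hb.2.symm) h₂)
  rcases hne.lt_or_gt with hlt | hlt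
  · exact not_isSaturatedForest_keep_compl ha.1 hb.1 (ha.2.trans hb.2.symm) hlt h
  · exact not_isSaturatedForest_keep_compl hb.1 ha.1 (hb.2.trans ha.2.symm) hlt h

lemma noEvenCycle_keep_compl (hodd : ∀ j, Odd (n j)) {i : Fin r}
    (hD : ∀ j, j ≠ i → ∃ e ∈ D, e.1 = j) : ((gluedCycles r n hpos).keep Dᶜ).NoEvenCycle := by
  intro l c f hcyc
  obtain rfl | hl : l = 1 ∨ 2 ≤ l := by have := hcyc.1; omega
  · exact odd_one
  have hg := hcyc.of_keep
  set g : ZMod l → (gluedCycles r n hpos).E := fun m => (f m).1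
  have hgi : ∀ m, (g m).1 = i := by
    intro m
    by_contra hm
    obtain ⟨e, he, hej⟩ := hD _ hm
    obtain ⟨m', rfl⟩ := (mem_range_iff_of_isCycle hg hl hej).mpr ⟨m, rfl⟩
    exact Finset.mem_compl.mp (f m').2 he
  have : NeZero l := ⟨by omega⟩
  have himage : Finset.univ.image g = Finset.univ.filter (fun e => e.1 = i) := by
    ext e
    simp only [Finset.mem_image, Finset.mem_univ, true_and, Finset.mem_filter]
    exact ⟨fun ⟨m, hm⟩ => hm ▸ hgi m, fun he =>
      (mem_range_iff_of_isCycle hg hl ((hgi 0).trans he.symm)).mp ⟨0, rfl⟩⟩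
  have hcard := Finset.card_image_of_injective Finset.univ hg.2.2.1
  rw [himage, Finset.card_univ, ZMod.card] at hcard
  have hcycle : (Finset.univ.filter fun e : (gluedCycles r n hpos).E => e.1 = i).card = n i :=
    (Finset.card_filter_fst_univ (α := fun j => Fin (n j)) i).trans (Fintype.card_fin _)
  rw [← hcard, hcycle]
  exact hodd i

lemma isOddSaturatedForest_keep_compl_iff (hr : 1 ≤ r) (hodd : ∀ j, Odd (n j))
    (hD : D.card = r - 1) :
    ((gluedCycles r n hpos).keep Dᶜ).IsOddSaturatedForest ↔
      ((gluedCycles r n hpos).keep Dᶜ).Preconnected ∧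
        ∃ i, ∀ j, (D.filter (fun e => e.1 = j)).card = if j = i then 0 else 1 := by
  constructor
  · rintro ⟨hsat, -⟩
    have : Nonempty (Fin r) := ⟨⟨0, hr⟩⟩
    refine ⟨preconnected_keep_compl (card_filter_fst_le_one hsat),
      Fintype.exists_eq_ite_of_sum_eq_card_sub_one (card_filter_fst_le_one hsat) ?_⟩
    rw [Fintype.card_fin, ← hD]
    exact (Finset.card_eq_sum_card_filter_fst (α := fun j => Fin (n j)) D).symm
  · rintro ⟨hconn, i, hi⟩
    refine ⟨.of_preconnected hconn (card_vertices_eq_card_edges_keep_compl hr hD),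
      noEvenCycle_keep_compl hodd (i := i) fun j hj => ?_⟩
    obtain ⟨e, he⟩ := Finset.card_pos.mp ((hi j).trans (if_neg hj)).symm.le
    exact ⟨e, (Finset.mem_filter.mp he).1, (Finset.mem_filter.mp he).2⟩

lemma card_eq_and_isOddSaturatedForest_keep_compl_iff (hr : 1 ≤ r) (hodd : ∀ j, Odd (n j)) :
    (D.card = r - 1 ∧ ((gluedCycles r n hpos).keep Dᶜ).IsOddSaturatedForest) ↔
      ∃ i, ∀ j, (D.filter (fun e => e.1 = j)).card = if j = i then 0 else 1 := by
  constructor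
  · rintro ⟨hD, h⟩
    exact ((isOddSaturatedForest_keep_compl_iff hr hodd hD).mp h).2
  · rintro ⟨i, hi⟩
    have hD : D.card = r - 1 := calc
      D.card = ∑ j, (D.filter (fun e => e.1 = j)).card :=
        Finset.card_eq_sum_card_filter_fst (α := fun j => Fin (n j)) D
      _ = ∑ j : Fin r, if j = i then 0 else 1 := Finset.sum_congr rfl fun j _ => hi j
      _ = r - 1 := by simp [Finset.sum_ite, Finset.filter_ne']
    refine ⟨hD, (isOddSaturatedForest_keep_compl_iff hr hodd hD).mpr ⟨?_, i, hi⟩⟩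
    exact preconnected_keep_compl fun j => (hi j).trans_le (by split_ifs <;> simp)

end gluedCycles

/-- For the graph `G` of `r ≥ 2` odd cycles glued at a common vertex, the spanning
subgraphs with all the vertices and `|V|` edges (i.e. whose set `D` of deleted
edges has `r - 1` elements) that are odd saturated forests are exactly the
connected subgraphs obtained by deleting one edge from each of `r - 1` of the
cycles; and there are exactly `∑ i, ∏ j ≠ i, n j` of them. -/
theorem gluedCycles_odd_saturated_forests (r : ℕ) (hr : 2 ≤ r)
    (n : Fin r → ℕ) (hpos : ∀ j, 0 < n j) (hodd : ∀ j, Odd (n j)) :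
    (∀ D : Finset (gluedCycles r n hpos).E, D.card = r - 1 →
      ((((gluedCycles r n hpos).keep Dᶜ).IsOddSaturatedForest) ↔
        (((gluedCycles r n hpos).keep Dᶜ).Preconnected ∧
          ∃ i : Fin r, (∀ e ∈ D, e.1 ≠ i) ∧
            ∀ j, j ≠ i → (D.filter (fun e => e.1 = j)).card = 1))) ∧
    Nat.card {D : Finset (gluedCycles r n hpos).E //
        D.card = r - 1 ∧ (((gluedCycles r n hpos).keep Dᶜ).IsOddSaturatedForest)} =
      ∑ i, ∏ j ∈ Finset.univ.erase i, n j := by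
  have hr' : 1 ≤ r := by omega
  refine ⟨fun D hD => ?_, ?_⟩
  · rw [gluedCycles.isOddSaturatedForest_keep_compl_iff hr' hodd hD]
    exact and_congr_right' <| exists_congr fun i =>
      Finset.forall_card_filter_fst_eq_ite_iff (α := fun j => Fin (n j)) D i
  · rw [Nat.card_congr (Equiv.subtypeEquivRight fun D =>
      gluedCycles.card_eq_and_isOddSaturatedForest_keep_compl_iff hr' hodd)]
    exact (Finset.card_exists_forall_card_filter_fst_eq_ite (α := fun j => Fin (n j))).trans
      (Finset.sum_congr rfl fun i _ => Finset.prod_congr rfl fun j _ => Fintype.card_fin _)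
end

section
/- If a square arrowhead matrix M of size n+1 has (1,1) entry a, first-row entries b_1,…,b_n, first-column entries c_1,…,c_n, and diagonal entries d_1,…,d_n (all other entries zero), then det M = a·∏_{j=1}^n d_j − ∑_{k=1}^n b_k c_k ∏_{j≠k} d_j. -/
open Finset Matrix

lemma prod_erase_eq_succAbove {R : Type*} [CommRing R] {m : ℕ} (k : Fin (m + 1))
    (d : Fin (m + 1) → R) :
    ∏ j ∈ univ.erase k, d j = ∏ i : Fin m, d (k.succAbove i) := by
  have : ∏ i : Fin m, d (k.succAbove i) = ∏ j ∈ univ.map k.succAboveEmb, d j := by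
    rw [Finset.prod_map]; rfl
  rw [this]
  congr 1
  ext j
  simp [Fin.succAboveEmb, Fin.exists_succAbove_eq_iff, eq_comm (a := j), and_comm]

lemma arrow_minor {R : Type*} [CommRing R] {m : ℕ} (a : R) (b c d : Fin (m + 1) → R)
    (k : Fin (m + 1)) :
    ((Matrix.of (Fin.cons (Fin.cons a b)
        (fun k : Fin (m + 1) => Fin.cons (c k) (fun j : Fin (m + 1) => if k = j then d k else 0)
          : Fin (m + 1) → Fin (m + 2) → R))).submatrix k.succ.succAbove Fin.succ).det
      = (-1) ^ (k : ℕ) * b k * ∏ j ∈ univ.erase k, d j := by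
  rw [Matrix.det_succ_row_zero]
  rw [Finset.sum_eq_single k]
  · have h0 : k.succ.succAbove 0 = 0 := Fin.succAbove_ne_zero_zero (Fin.succ_ne_zero k)
    have hrow : ∀ j, (Matrix.of (Fin.cons (Fin.cons a b)
        (fun k : Fin (m + 1) => Fin.cons (c k) (fun j : Fin (m + 1) => if k = j then d k else 0)
          : Fin (m + 1) → Fin (m + 2) → R))).submatrix k.succ.succAbove Fin.succ 0 j = b j := by
      intro j; simp [h0]
    rw [hrow]
    have hdiag : ((Matrix.of (Fin.cons (Fin.cons a b)
        (fun k : Fin (m + 1) => Fin.cons (c k) (fun j : Fin (m + 1) => if k = j then d k else 0)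
          : Fin (m + 1) → Fin (m + 2) → R))).submatrix k.succ.succAbove
        Fin.succ).submatrix Fin.succ k.succAbove = Matrix.diagonal (fun r => d (k.succAbove r)) := by
      ext r s
      simp only [submatrix_apply, Fin.succ_succAbove_succ, of_apply, Fin.cons_succ,
        Matrix.diagonal, Fin.succAbove_right_inj]
    rw [hdiag, Matrix.det_diagonal, ← prod_erase_eq_succAbove]
  · intro j _ hj
    have ⟨s0, hs0⟩ := Fin.exists_succAbove_eq (Ne.symm hj)
    rw [Matrix.det_eq_zero_of_column_eq_zero s0, mul_zero]
    intro r
    simp only [submatrix_apply, Fin.succ_succAbove_succ, of_apply, Fin.cons_succ, hs0]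
    exact if_neg (Fin.succAbove_ne k r)
  · simp

/-- Determinant of an arrowhead matrix: if `M` has `(1,1)` entry `a`, first row
`b`, first column `c`, diagonal `d` and zeros elsewhere, then
`det M = a ∏ⱼ dⱼ − ∑ₖ bₖ cₖ ∏_{j≠k} dⱼ`. -/
theorem det_arrowhead {R : Type*} [CommRing R] (n : ℕ) (a : R) (b c d : Fin n → R) :
    (Matrix.of (Fin.cons (Fin.cons a b)
        (fun k : Fin n => Fin.cons (c k) (fun j : Fin n => if k = j then d k else 0)
          : Fin n → Fin (n + 1) → R))).det =
      a * ∏ j, d j - ∑ k, b k * c k * ∏ j ∈ univ.erase k, d j := by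
  rw [Matrix.det_succ_column_zero, Fin.sum_univ_succ]
  have hd : (Matrix.of (Fin.cons (Fin.cons a b)
        (fun k : Fin n => Fin.cons (c k) (fun j : Fin n => if k = j then d k else 0)
          : Fin n → Fin (n + 1) → R))).submatrix (0 : Fin (n + 1)).succAbove Fin.succ
      = Matrix.diagonal d := by
    ext i j
    simp only [Fin.succAbove_zero, submatrix_apply, of_apply, Fin.cons_succ, Matrix.diagonal]
  rw [hd, Matrix.det_diagonal]
  have hterm : ∀ k : Fin n, (-1 : R) ^ ((k.succ : Fin (n+1)) : ℕ) *
      (Matrix.of (Fin.cons (Fin.cons a b)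
        (fun k : Fin n => Fin.cons (c k) (fun j : Fin n => if k = j then d k else 0)
          : Fin n → Fin (n + 1) → R))) k.succ 0 *
      ((Matrix.of (Fin.cons (Fin.cons a b)
        (fun k : Fin n => Fin.cons (c k) (fun j : Fin n => if k = j then d k else 0)
          : Fin n → Fin (n + 1) → R))).submatrix k.succ.succAbove Fin.succ).det
      = -(b k * c k * ∏ j ∈ univ.erase k, d j) := by
    intro k
    obtain ⟨m, rfl⟩ : ∃ m, n = m + 1 := ⟨n - 1, (Nat.succ_pred_eq_of_pos k.pos).symm⟩
    rw [arrow_minor a b c d k]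
    have hM : (Matrix.of (Fin.cons (Fin.cons a b)
        (fun k : Fin (m+1) => Fin.cons (c k) (fun j : Fin (m+1) => if k = j then d k else 0)
          : Fin (m+1) → Fin (m + 2) → R))) k.succ 0 = c k := by simp
    rw [hM, Fin.val_succ, pow_succ]
    have : ((-1 : R) ^ (k : ℕ)) * ((-1 : R) ^ (k : ℕ)) = 1 := by
      rw [← mul_pow]; simp
    calc (-1:R) ^ (k:ℕ) * -1 * c k * ((-1) ^ (k:ℕ) * b k * ∏ j ∈ univ.erase k, d j)
        = ((-1:R) ^ (k:ℕ) * ((-1) ^ (k:ℕ))) * (-(b k * c k * ∏ j ∈ univ.erase k, d j)) := by ring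
      _ = -(b k * c k * ∏ j ∈ univ.erase k, d j) := by rw [this, one_mul]
  rw [Finset.sum_congr rfl (fun k _ => hterm k)]
  simp [sub_eq_add_neg]
end
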